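/- arXiv:2304.04485 — 8 statements merged into one kernel-verified Lean document; each statement's English description precedes it below -/
import Mathlib

section
/- Let a, b be points in the open unit disk, nonzero, non-collinear with 0, and with |a| ≠ |b|. Define c = (a − b + ab(conj(a)−conj(b)))/(|a|² − |b|²) and h(z) = (c·conj(z) − 1)/(conj(z) − conj(c)). Then h(a) = b and h maps the unit disk onto itself, i.e., |z| < 1 implies |h(z)| < 1. -/
/-!
The map `h` is the inversion in the circle centred at `c` of radius `√(‖c‖² - 1)`; when `‖c‖ > 1`
this circle is orthogonal to the unit circle, so the inversion preserves the unit disk, by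
`|z̄ - c̄|² - |c z̄ - 1|² = (|c|² - 1)(1 - |z|²)`. That `‖c‖ > 1` follows from the identity
`|a - b + ab(ā - b̄)|² = (|a|² - |b|²)² + (1 - |a|²)(1 - |b|²)|a - b|²`, and `h a = b` is a direct
computation.
-/

open Complex ComplexConjugate

/-- `c + (‖c‖² - 1) / (z̄ - c̄)`, written over a common denominator. -/
noncomputable def orthogonalInversion (c z : ℂ) : ℂ :=
  (c * conj z - 1) / (conj z - conj c)

noncomputable def inversionCenter (a b : ℂ) : ℂ :=
  (a - b + a * b * (conj a - conj b)) / ((‖a‖ ^ 2 - ‖b‖ ^ 2 : ℝ) : ℂ)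

lemma normSq_conj_sub_conj_eq (c z : ℂ) :
    normSq (conj z - conj c) = normSq (c * conj z - 1) + (normSq c - 1) * (1 - normSq z) := by
  simp only [normSq_apply, sub_re, sub_im, mul_re, mul_im, conj_re, conj_im, one_re, one_im]
  ring

lemma norm_orthogonalInversion_lt_one {c z : ℂ} (hc : 1 < ‖c‖) (hz : ‖z‖ < 1) :
    ‖orthogonalInversion c z‖ < 1 := by
  have hden : conj z - conj c ≠ 0 := by
    rw [sub_ne_zero, Ne, (starRingEnd ℂ).injective.eq_iff]
    rintro rfl
    linarith
  have hc' : 1 < normSq c := by rwa [← Complex.sq_norm, one_lt_sq_iff₀ (norm_nonneg c)]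
  have hz' : normSq z < 1 := by rwa [← Complex.sq_norm, sq_lt_one_iff₀ (norm_nonneg z)]
  have hsq : ‖c * conj z - 1‖ ^ 2 < ‖conj z - conj c‖ ^ 2 := by
    rw [Complex.sq_norm, Complex.sq_norm, normSq_conj_sub_conj_eq]
    nlinarith
  rw [orthogonalInversion, norm_div, div_lt_one (norm_pos_iff.mpr hden)]
  exact (sq_lt_sq₀ (norm_nonneg _) (norm_nonneg _)).mp hsq

lemma normSq_sub_add_mul_mul_conj_sub (a b : ℂ) :
    normSq (a - b + a * b * (conj a - conj b)) =
      (normSq a - normSq b) ^ 2 + (1 - normSq a) * (1 - normSq b) * normSq (a - b) := by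
  simp only [normSq_apply, sub_re, sub_im, add_re, add_im, mul_re, mul_im, conj_re, conj_im]
  ring

lemma ofReal_sq_norm_sub_sq_norm (a b : ℂ) :
    ((‖a‖ ^ 2 - ‖b‖ ^ 2 : ℝ) : ℂ) = a * conj a - b * conj b := by
  simp only [Complex.sq_norm, ofReal_sub, mul_conj]

section inversionCenter

variable {a b : ℂ}

lemma normSq_sub_normSq_ne_zero (hne : ‖a‖ ≠ ‖b‖) : normSq a - normSq b ≠ 0 := by
  rwa [← Complex.sq_norm, ← Complex.sq_norm, sub_ne_zero, Ne,
    pow_left_inj₀ (norm_nonneg a) (norm_nonneg b) two_ne_zero]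

lemma one_lt_norm_inversionCenter (ha : ‖a‖ < 1) (hb : ‖b‖ < 1) (hne : ‖a‖ ≠ ‖b‖) :
    1 < ‖inversionCenter a b‖ := by
  have hD := normSq_sub_normSq_ne_zero hne
  have ha' : normSq a < 1 := by rwa [← Complex.sq_norm, sq_lt_one_iff₀ (norm_nonneg a)]
  have hb' : normSq b < 1 := by rwa [← Complex.sq_norm, sq_lt_one_iff₀ (norm_nonneg b)]
  have hab : 0 < normSq (a - b) := normSq_pos.mpr (sub_ne_zero.mpr (by rintro rfl; exact hne rfl))
  rw [← one_lt_sq_iff₀ (norm_nonneg _), Complex.sq_norm, inversionCenter, normSq_div,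
    normSq_ofReal, Complex.sq_norm, Complex.sq_norm, normSq_sub_add_mul_mul_conj_sub,
    one_lt_div (mul_self_pos.mpr hD)]
  nlinarith [mul_pos (mul_pos (sub_pos.mpr ha') (sub_pos.mpr hb')) hab]

lemma orthogonalInversion_inversionCenter (ha : ‖a‖ < 1) (hb : ‖b‖ < 1) (hne : ‖a‖ ≠ ‖b‖) :
    orthogonalInversion (inversionCenter a b) a = b := by
  have hden : conj a - conj (inversionCenter a b) ≠ 0 := by
    rw [sub_ne_zero, Ne, (starRingEnd ℂ).injective.eq_iff]
    intro h
    linarith [one_lt_norm_inversionCenter ha hb hne, congrArg norm h]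
  have hD : a * conj a - b * conj b ≠ 0 := by
    rw [mul_conj, mul_conj, ← ofReal_sub, ofReal_ne_zero]
    exact normSq_sub_normSq_ne_zero hne
  rw [orthogonalInversion, div_eq_iff hden, inversionCenter, ofReal_sq_norm_sub_sq_norm]
  simp only [map_div₀, map_sub, map_add, map_mul, conj_conj]
  field_simp
  ring

end inversionCenter

theorem inversion_maps_disk_general (a b : ℂ)
    (ha : ‖a‖ < 1) (hb : ‖b‖ < 1)
    (hne : ‖a‖ ≠ ‖b‖) :
    let c := (a - b + a * b * (starRingEnd ℂ a - starRingEnd ℂ b)) /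
      ((‖a‖ ^ 2 - ‖b‖ ^ 2 : ℝ) : ℂ)
    let h : ℂ → ℂ := fun z => (c * starRingEnd ℂ z - 1) / (starRingEnd ℂ z - starRingEnd ℂ c)
    h a = b ∧ ∀ z : ℂ, ‖z‖ < 1 → ‖h z‖ < 1 :=
  ⟨orthogonalInversion_inversionCenter ha hb hne,
    fun _ hz => norm_orthogonalInversion_lt_one (one_lt_norm_inversionCenter ha hb hne) hz⟩

theorem inversion_maps_disk (a b : ℂ)
    (ha0 : a ≠ 0) (hb0 : b ≠ 0)
    (ha : ‖a‖ < 1) (hb : ‖b‖ < 1)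
    (hne : ‖a‖ ≠ ‖b‖)
    (hnc : ¬ Collinear ℝ ({0, a, b} : Set ℂ)) :
    let c := (a - b + a * b * (starRingEnd ℂ a - starRingEnd ℂ b)) /
      ((‖a‖ ^ 2 - ‖b‖ ^ 2 : ℝ) : ℂ)
    let h : ℂ → ℂ := fun z => (c * starRingEnd ℂ z - 1) / (starRingEnd ℂ z - starRingEnd ℂ c)
    h a = b ∧ ∀ z : ℂ, ‖z‖ < 1 → ‖h z‖ < 1 :=
  inversion_maps_disk_general a b ha hb hne
end

section
/- For 0 < r < s < 1, let p = ((r+s)/(1+rs), √((1−r²)(1−s²))/(1+rs)) regarded as the complex number ((r+s) + i√((1−r²)(1−s²)))/(1+rs). Then |p| = 1, the circle through r, s and p with center (r+s)/2 + i√((1−r²)(1−s²))/2 and radius (1−rs)/2 is internally tangent to the unit circle at p, and the angle ∠(r, p, s) at vertex p satisfies ∠(r, p, s) = arcsin((s−r)/(1−rs)). -/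
open Complex EuclideanGeometry

/-!
With `d ^ 2 = (1 - r ^ 2) * (1 - s ^ 2)` one has the two identities
`(r + s) ^ 2 + d ^ 2 = (1 + r * s) ^ 2` and `(s - r) ^ 2 + d ^ 2 = (1 - r * s) ^ 2`.
The first says `‖c‖ = (1 + r s) / 2`, so `p = 2 c / (1 + r s)` is the point of the unit circle on
the ray through `c`, and `‖c‖ + (1 - r s) / 2 = 1` gives the internal tangency; the second says
that `r` and `s` lie on the circle. Multiplying `r - p` and `s - p` by `1 + r s` gives
`-(s (1 - r²) + i d)` and `-(r (1 - s²) + i d)`, whose angle has cosine `d / (1 - r s)`;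
by the second identity its sine is `(s - r) / (1 - r s)`.
-/

theorem Real.arccos_eq_arcsin_of_sq_add_sq {x y : ℝ} (hx : 0 ≤ x) (hy : 0 ≤ y)
    (h : x ^ 2 + y ^ 2 = 1) : Real.arccos x = Real.arcsin y := by
  rw [Real.arcsin_eq_arccos hy, show 1 - y ^ 2 = x ^ 2 by linarith, Real.sqrt_sq hx]

namespace Complex

theorem norm_eq_of_re_sq_add_im_sq {z : ℂ} {e : ℝ} (he : 0 ≤ e)
    (h : z.re ^ 2 + z.im ^ 2 = e ^ 2) : ‖z‖ = e := by
  rw [← sq_eq_sq₀ (norm_nonneg z) he, Complex.sq_norm, normSq_apply, ← h]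
  ring

theorem real_inner_eq_re_mul_re_add_im_mul_im (z w : ℂ) :
    inner ℝ z w = z.re * w.re + z.im * w.im := by
  simp only [Complex.inner, mul_re, conj_re, conj_im]
  ring

end Complex

namespace TangentCircle

variable {r s d : ℝ}

noncomputable def center (r s d : ℝ) : ℂ := (((r + s) / 2 : ℝ) : ℂ) + I * ((d / 2 : ℝ) : ℂ)

noncomputable def point (r s d : ℝ) : ℂ := (((r + s : ℝ) : ℂ) + I * (d : ℂ)) / ((1 + r * s : ℝ) : ℂ)

theorem center_comm (r s d : ℝ) : center r s d = center s r d := by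
  simp only [center, add_comm r s]

theorem point_comm (r s d : ℝ) : point r s d = point s r d := by
  simp only [point, add_comm r s, mul_comm r s]

theorem point_eq_mul_center (ht : 1 + r * s ≠ 0) :
    point r s d = ((2 / (1 + r * s) : ℝ) : ℂ) * center r s d := by
  have ht' : (1 + r * s : ℂ) ≠ 0 := by exact_mod_cast ht
  simp only [point, center]
  push_cast
  field_simp

theorem point_sub_center (ht : 1 + r * s ≠ 0) :
    point r s d - center r s d = (((1 - r * s) / (1 + r * s) : ℝ) : ℂ) * center r s d := by
  have ht' : (1 + r * s : ℂ) ≠ 0 := by exact_mod_cast ht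
  rw [point_eq_mul_center ht]
  push_cast
  field_simp
  ring

theorem one_add_mul_smul_ofReal_sub_point (ht : 1 + r * s ≠ 0) :
    (1 + r * s) • ((r : ℂ) - point r s d) = -(((s * (1 - r ^ 2) : ℝ) : ℂ) + I * d) := by
  have ht' : (1 + r * s : ℂ) ≠ 0 := by exact_mod_cast ht
  simp only [point, real_smul]
  push_cast
  field_simp
  ring

variable (hd : d ^ 2 = (1 - r ^ 2) * (1 - s ^ 2))
include hd

theorem norm_center (ht : 0 ≤ 1 + r * s) : ‖center r s d‖ = (1 + r * s) / 2 := by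
  apply norm_eq_of_re_sq_add_im_sq (by positivity)
  simp only [center, add_re, add_im, ofReal_re, ofReal_im, mul_re, mul_im, I_re, I_im]
  linear_combination hd / 4

theorem norm_ofReal_left_sub_center (hrs : r * s ≤ 1) :
    ‖(r : ℂ) - center r s d‖ = (1 - r * s) / 2 := by
  apply norm_eq_of_re_sq_add_im_sq (by linarith)
  simp only [center, sub_re, sub_im, add_re, add_im, ofReal_re, ofReal_im, mul_re, mul_im, I_re,
    I_im]
  linear_combination hd / 4

theorem norm_ofReal_right_sub_center (hrs : r * s ≤ 1) :
    ‖(s : ℂ) - center r s d‖ = (1 - r * s) / 2 := by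
  rw [center_comm, mul_comm r s]
  exact norm_ofReal_left_sub_center (by linear_combination hd) (by linarith)

theorem norm_le_one_of_norm_sub_center (ht : 0 ≤ 1 + r * s) {z : ℂ}
    (hz : ‖z - center r s d‖ = (1 - r * s) / 2) : ‖z‖ ≤ 1 :=
  calc ‖z‖ ≤ ‖center r s d‖ + ‖z - center r s d‖ := norm_le_norm_add_norm_sub' z _
    _ = 1 := by rw [norm_center hd ht, hz]; ring

theorem norm_point (ht : 0 < 1 + r * s) : ‖point r s d‖ = 1 := by
  rw [point_eq_mul_center ht.ne', norm_mul, norm_real, Real.norm_of_nonneg (by positivity),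
    norm_center hd ht.le]
  field_simp

theorem norm_point_sub_center (ht : 0 < 1 + r * s) (hrs : r * s ≤ 1) :
    ‖point r s d - center r s d‖ = (1 - r * s) / 2 := by
  rw [point_sub_center ht.ne', norm_mul, norm_real, Real.norm_of_nonneg
    (div_nonneg (by linarith) ht.le), norm_center hd ht.le]
  field_simp

theorem angle_ofReal_add_I_mul_eq_arccos (hr : -1 < r) (hrs : r ≤ s) (hs : s < 1) (hd0 : 0 ≤ d) :
    InnerProductGeometry.angle (((s * (1 - r ^ 2) : ℝ) : ℂ) + I * d)
      (((r * (1 - s ^ 2) : ℝ) : ℂ) + I * d) = Real.arccos (d / (1 - r * s)) := by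
  set u : ℂ := ((s * (1 - r ^ 2) : ℝ) : ℂ) + I * d
  set v : ℂ := ((r * (1 - s ^ 2) : ℝ) : ℂ) + I * d
  have ht : 0 < 1 + r * s := by nlinarith
  have ht' : 0 < 1 - r * s := by nlinarith
  have hd_pos : 0 < d := by
    have : 0 < d ^ 2 := hd ▸ mul_pos (by nlinarith) (by nlinarith)
    exact hd0.lt_of_ne (by rintro rfl; norm_num at this)
  have h_inner : inner ℝ u v = d ^ 2 * (1 + r * s) := by
    simp only [real_inner_eq_re_mul_re_add_im_mul_im, u, v, add_re, add_im, ofReal_re, ofReal_im,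
      mul_re, mul_im, I_re, I_im]
    linear_combination (-(r * s)) * hd
  have hu2 : ‖u‖ ^ 2 = (1 - r ^ 2) * (1 - r ^ 2 * s ^ 2) := by
    simp only [Complex.sq_norm, normSq_apply, u, add_re, add_im, ofReal_re, ofReal_im,
      mul_re, mul_im, I_re, I_im]
    linear_combination hd
  have hv2 : ‖v‖ ^ 2 = (1 - s ^ 2) * (1 - r ^ 2 * s ^ 2) := by
    simp only [Complex.sq_norm, normSq_apply, v, add_re, add_im, ofReal_re, ofReal_im,
      mul_re, mul_im, I_re, I_im]
    linear_combination hd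
  have h_norm : ‖u‖ * ‖v‖ = d * (1 - r * s) * (1 + r * s) := by
    rw [← sq_eq_sq₀ (by positivity) (by positivity), mul_pow, hu2, hv2]
    linear_combination (-(1 - r ^ 2 * s ^ 2) ^ 2) * hd
  rw [InnerProductGeometry.angle, h_inner, h_norm]
  congr 1
  field_simp

theorem angle_ofReal_point_ofReal (hr : -1 < r) (hrs : r ≤ s) (hs : s < 1) (hd0 : 0 ≤ d) :
    angle (r : ℂ) (point r s d) (s : ℂ) = Real.arcsin ((s - r) / (1 - r * s)) := by
  have ht : 0 < 1 + r * s := by nlinarith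
  have ht' : 0 < 1 - r * s := by nlinarith
  have h_scale_s := one_add_mul_smul_ofReal_sub_point (d := d) (by linarith : 1 + s * r ≠ 0)
  rw [point_comm, mul_comm s r] at h_scale_s
  rw [angle, ← InnerProductGeometry.angle_smul_smul ht.ne', vsub_eq_sub, vsub_eq_sub,
    one_add_mul_smul_ofReal_sub_point ht.ne', h_scale_s, InnerProductGeometry.angle_neg_neg,
    angle_ofReal_add_I_mul_eq_arccos hd hr hrs hs hd0]
  refine Real.arccos_eq_arcsin_of_sq_add_sq (div_nonneg hd0 ht'.le)
    (div_nonneg (by linarith) ht'.le) ?_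
  field_simp
  linear_combination hd

end TangentCircle

open TangentCircle in
theorem tangent_circle_radial_points (r s : ℝ) (h0r : 0 < r) (hrs : r < s) (hs1 : s < 1) :
    let d : ℝ := Real.sqrt ((1 - r ^ 2) * (1 - s ^ 2))
    let p : ℂ := (((r + s : ℝ) : ℂ) + Complex.I * (d : ℂ)) / ((1 + r * s : ℝ) : ℂ)
    let c : ℂ := (((r + s) / 2 : ℝ) : ℂ) + Complex.I * ((d / 2 : ℝ) : ℂ)
    ‖p‖ = 1 ∧
      ‖(r : ℂ) - c‖ = (1 - r * s) / 2 ∧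
      ‖(s : ℂ) - c‖ = (1 - r * s) / 2 ∧
      ‖p - c‖ = (1 - r * s) / 2 ∧
      (∀ z : ℂ, ‖z - c‖ = (1 - r * s) / 2 → ‖z‖ ≤ 1) ∧
      EuclideanGeometry.angle (r : ℂ) p (s : ℂ) = Real.arcsin ((s - r) / (1 - r * s)) := by
  intro d p c
  have hd : d ^ 2 = (1 - r ^ 2) * (1 - s ^ 2) :=
    Real.sq_sqrt (mul_nonneg (by nlinarith) (by nlinarith))
  have ht : 0 < 1 + r * s := by nlinarith
  have hrs1 : r * s ≤ 1 := by nlinarith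
  exact ⟨norm_point hd ht, norm_ofReal_left_sub_center hd hrs1,
    norm_ofReal_right_sub_center hd hrs1, norm_point_sub_center hd ht hrs1,
    fun _ => norm_le_one_of_norm_sub_center hd ht.le,
    angle_ofReal_point_ofReal hd (by linarith) hrs.le hs1 (Real.sqrt_nonneg _)⟩
end

section
/- For 0 < r < s < 1, the point p = ((r+s) + i√((1−r²)(1−s²)))/(1+rs) on the unit circle satisfies: the segment from −i to p bisects the angle ∠(r, p, s), i.e., the angle between the vectors r − p and (−i) − p equals the angle between the vectors s − p and (−i) − p. -/
/-!
For `‖p‖ = 1` and real `x`, expanding gives `⟪x - p, -i - p⟫ = 1 + Im p - x Re p` and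
`‖x - p‖² = x² - 2x Re p + 1`. At the given point `p` these make
`⟪x - p, -i - p⟫ / ‖x - p‖ = (√(1 - x²) + √(1 - y²)) / √(1 - x²y²)` for `(x, y) = (r, s)`.
Both this value and `p` are symmetric in `r` and `s`, so the two angles at `p` have the same cosine.
-/

open Complex

theorem InnerProductGeometry.angle_eq_angle_of_inner_div_norm_eq {V : Type*}
    [NormedAddCommGroup V] [InnerProductSpace ℝ V] {u v w : V}
    (h : inner ℝ u w / ‖u‖ = inner ℝ v w / ‖v‖) :
    InnerProductGeometry.angle u w = InnerProductGeometry.angle v w := by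
  unfold InnerProductGeometry.angle
  rw [← div_div, h, div_div]

theorem Complex.inner_ofReal_sub_neg_I_sub {p : ℂ} (hp : ‖p‖ = 1) (x : ℝ) :
    inner ℝ ((x : ℂ) - p) (-I - p) = 1 + p.im - p.re * x := by
  have hsq : p.re * p.re + p.im * p.im = 1 := by rw [← normSq_apply, ← Complex.sq_norm, hp, one_pow]
  simp only [Complex.inner, mul_re, conj_re, conj_im, sub_re, sub_im, neg_re, neg_im, I_re, I_im,
    ofReal_re, ofReal_im]
  linarith

theorem Complex.norm_ofReal_sub_sq {p : ℂ} (hp : ‖p‖ = 1) (x : ℝ) :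
    ‖(x : ℂ) - p‖ ^ 2 = x ^ 2 - 2 * p.re * x + 1 := by
  have hsq : p.re * p.re + p.im * p.im = 1 := by rw [← normSq_apply, ← Complex.sq_norm, hp, one_pow]
  rw [Complex.sq_norm, normSq_apply]
  simp only [sub_re, sub_im, ofReal_re, ofReal_im]
  linear_combination hsq

noncomputable def apex (x y : ℝ) : ℂ :=
  (((x + y : ℝ) : ℂ) + I * ((Real.sqrt ((1 - x ^ 2) * (1 - y ^ 2)) : ℝ) : ℂ)) / ((1 + x * y : ℝ) : ℂ)

theorem apex_comm (x y : ℝ) : apex x y = apex y x := by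
  rw [apex, apex, add_comm x, mul_comm x, mul_comm (1 - x ^ 2)]

theorem apex_re (x y : ℝ) : (apex x y).re = (x + y) / (1 + x * y) := by
  rw [apex, div_ofReal_re]
  simp

theorem apex_im (x y : ℝ) :
    (apex x y).im = Real.sqrt ((1 - x ^ 2) * (1 - y ^ 2)) / (1 + x * y) := by
  rw [apex, div_ofReal_im]
  simp

section

variable {x y : ℝ} (hx : x ^ 2 < 1) (hy : y ^ 2 ≤ 1)
include hx hy

theorem one_add_mul_pos_of_sq_lt_one : 0 < 1 + x * y := by
  nlinarith [sq_nonneg (x + y), sq_nonneg (x - y)]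

theorem norm_apex : ‖apex x y‖ = 1 := by
  have hd := (one_add_mul_pos_of_sq_lt_one hx hy).ne'
  have hab := Real.sq_sqrt (mul_nonneg (sub_nonneg.2 hx.le) (sub_nonneg.2 hy))
  rw [← pow_eq_one_iff_of_nonneg (norm_nonneg _) two_ne_zero, Complex.sq_norm, normSq_apply,
    apex_re, apex_im]
  field_simp
  linear_combination hab

theorem inner_div_norm_apex :
    inner ℝ ((x : ℂ) - apex x y) (-I - apex x y) / ‖(x : ℂ) - apex x y‖ =
      (Real.sqrt (1 - x ^ 2) + Real.sqrt (1 - y ^ 2)) / Real.sqrt (1 - x ^ 2 * y ^ 2) := by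
  have hd := one_add_mul_pos_of_sq_lt_one hx hy
  have hp := norm_apex hx hy
  set a := Real.sqrt (1 - x ^ 2)
  set b := Real.sqrt (1 - y ^ 2)
  have ha : 0 < a := Real.sqrt_pos.2 (by linarith)
  have ha2 : a ^ 2 = 1 - x ^ 2 := Real.sq_sqrt (by linarith)
  have hc2 : Real.sqrt (1 - x ^ 2 * y ^ 2) ^ 2 = 1 - x ^ 2 * y ^ 2 :=
    Real.sq_sqrt (by nlinarith)
  have hab : Real.sqrt ((1 - x ^ 2) * (1 - y ^ 2)) = a * b :=
    Real.sqrt_mul (by linarith) _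
  have hinner : inner ℝ ((x : ℂ) - apex x y) (-I - apex x y) = a * (a + b) / (1 + x * y) := by
    rw [Complex.inner_ofReal_sub_neg_I_sub hp, apex_re, apex_im, hab]
    field_simp
    linear_combination -ha2
  have hnorm : ‖(x : ℂ) - apex x y‖ = a * Real.sqrt (1 - x ^ 2 * y ^ 2) / (1 + x * y) := by
    rw [← sq_eq_sq₀ (norm_nonneg _) (by positivity), Complex.norm_ofReal_sub_sq hp, apex_re,
      div_pow, mul_pow, ha2, hc2]
    field_simp
    ring
  rw [hinner, hnorm]
  have : Real.sqrt (1 - x ^ 2 * y ^ 2) ≠ 0 := (Real.sqrt_pos.2 (by nlinarith)).ne'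
  field_simp

end

theorem angle_bisection_radial (r s : ℝ) (h0r : 0 < r) (hrs : r < s) (hs1 : s < 1) :
    let p : ℂ := (((r + s : ℝ) : ℂ) + Complex.I * ((Real.sqrt ((1 - r ^ 2) * (1 - s ^ 2)) : ℝ) : ℂ)) /
      ((1 + r * s : ℝ) : ℂ)
    EuclideanGeometry.angle (r : ℂ) p (-Complex.I) = EuclideanGeometry.angle (s : ℂ) p (-Complex.I) := by
  have hr : r ^ 2 < 1 := by nlinarith
  have hs : s ^ 2 < 1 := by nlinarith
  show EuclideanGeometry.angle (r : ℂ) (apex r s) (-I) =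
    EuclideanGeometry.angle (s : ℂ) (apex r s) (-I)
  apply InnerProductGeometry.angle_eq_angle_of_inner_div_norm_eq
  rw [vsub_eq_sub, vsub_eq_sub, vsub_eq_sub, inner_div_norm_apex hr hs.le, apex_comm,
    inner_div_norm_apex hs hr.le, add_comm, mul_comm]
end

section
/- For real numbers 0 < r < s < 1, the real number (r+s)/(1 + rs + √((1−r²)(1−s²))) is the hyperbolic midpoint of the segment [r,s] in the unit disk: it lies strictly between r and s, and its hyperbolic distance to r equals its hyperbolic distance to s, where the hyperbolic distance ρ between two points x < y in (−1,1) satisfies sinh(ρ/2) = (y−x)/√((1−x²)(1−y²)). -/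
/-! Write `a = √(1 - r²)`, `b = √(1 - s²)` and `D = 1 + rs + ab`, so that `x = (r + s) / D`.
Then `x - r = a (sa - rb) / D` and `s - x = b (sa - rb) / D`, with `sa - rb > 0`. This gives
`r < x < s`, and both sides of the distance equation reduce to `(sa - rb) / (D √(1 - x²))`. -/

section MidpointAlgebra

variable {r s a b : ℝ}

theorem div_one_add_mul_add_mul_sub_left (ha : a ^ 2 = 1 - r ^ 2) (hD : 1 + r * s + a * b ≠ 0) :
    (r + s) / (1 + r * s + a * b) - r = a * (s * a - r * b) / (1 + r * s + a * b) := by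
  rw [div_sub' hD, div_eq_div_iff hD hD]
  linear_combination (-s) * (1 + r * s + a * b) * ha

theorem sub_div_one_add_mul_add_mul (hb : b ^ 2 = 1 - s ^ 2) (hD : 1 + r * s + a * b ≠ 0) :
    s - (r + s) / (1 + r * s + a * b) = b * (s * a - r * b) / (1 + r * s + a * b) := by
  rw [sub_div' hD, div_eq_div_iff hD hD]
  linear_combination r * (1 + r * s + a * b) * hb

end MidpointAlgebra

/-- With `r = sin α`, `s = sin β` this is `sin (β - α) > 0`. -/
theorem mul_sqrt_one_sub_sq_sub_mul_sqrt_one_sub_sq_pos {r s : ℝ} (hr : -1 < r) (hrs : r < s)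
    (hs : s < 1) : 0 < s * √(1 - r ^ 2) - r * √(1 - s ^ 2) := by
  have ha := Real.sq_sqrt (show 0 ≤ 1 - r ^ 2 by nlinarith)
  have hb := Real.sq_sqrt (show 0 ≤ 1 - s ^ 2 by nlinarith)
  have ha0 : 0 < √(1 - r ^ 2) := Real.sqrt_pos.2 (by nlinarith)
  have hb0 : 0 < √(1 - s ^ 2) := Real.sqrt_pos.2 (by nlinarith)
  have hprod : (s * √(1 - r ^ 2) - r * √(1 - s ^ 2)) * (s * √(1 - r ^ 2) + r * √(1 - s ^ 2)) =
      (s - r) * (s + r) := by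
    linear_combination s ^ 2 * ha - r ^ 2 * hb
  rcases le_or_gt 0 r with hr0 | hr0
  · nlinarith [mul_nonneg hr0 hb0.le, mul_pos (hr0.trans_lt hrs) ha0]
  rcases le_or_gt s 0 with hs0 | hs0
  · nlinarith [mul_nonneg (neg_nonneg.2 hs0) ha0.le, mul_pos (neg_pos.2 (hrs.trans_le hs0)) hb0]
  · nlinarith [mul_pos hs0 ha0, mul_pos (neg_pos.2 hr0) hb0]

theorem hyperbolic_midpoint_radial (r s : ℝ) (h0r : 0 < r) (hrs : r < s) (hs1 : s < 1) :
    let x : ℝ := (r + s) / (1 + r * s + Real.sqrt ((1 - r ^ 2) * (1 - s ^ 2)))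
    r < x ∧ x < s ∧
      (x - r) / Real.sqrt ((1 - r ^ 2) * (1 - x ^ 2)) =
        (s - x) / Real.sqrt ((1 - x ^ 2) * (1 - s ^ 2)) := by
  intro x
  have hr2 : 0 < 1 - r ^ 2 := by nlinarith
  have hs2 : 0 < 1 - s ^ 2 := by nlinarith
  have hD : 0 < 1 + r * s + √(1 - r ^ 2) * √(1 - s ^ 2) :=
    add_pos_of_pos_of_nonneg (by nlinarith) (by positivity)
  have hx : x = (r + s) / (1 + r * s + √(1 - r ^ 2) * √(1 - s ^ 2)) := by
    rw [← Real.sqrt_mul hr2.le]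
  have hk := mul_sqrt_one_sub_sq_sub_mul_sqrt_one_sub_sq_pos (by linarith) hrs hs1
  have hxr := div_one_add_mul_add_mul_sub_left (Real.sq_sqrt hr2.le) hD.ne'
  have hsx := sub_div_one_add_mul_add_mul (Real.sq_sqrt hs2.le) hD.ne'
  rw [← hx] at hxr hsx
  have hrx : r < x := sub_pos.1 (hxr ▸ by positivity)
  have hxs : x < s := sub_pos.1 (hsx ▸ by positivity)
  have hx2 : 0 < 1 - x ^ 2 := by nlinarith
  refine ⟨hrx, hxs, ?_⟩
  rw [Real.sqrt_mul hr2.le, Real.sqrt_mul hx2.le, hxr, hsx]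
  field_simp
end

section
/- For real numbers m ∈ (0,1), r > 0, and u = sinh(r/2), the following chain of inequalities holds: (1+m)·tanh(r/4) ≤ (1+m)u/(1 + √(1 + (1−m²)u²)) ≤ min{ (1+m)u/2, √((1+m)/(1−m))·tanh(r/4) }. -/
theorem middle_term_bounds (m r : ℝ) (hm0 : 0 < m) (hm1 : m < 1) (hr : 0 < r) :
    let u := Real.sinh (r / 2)
    (1 + m) * Real.tanh (r / 4) ≤ (1 + m) * u / (1 + Real.sqrt (1 + (1 - m ^ 2) * u ^ 2)) ∧
      (1 + m) * u / (1 + Real.sqrt (1 + (1 - m ^ 2) * u ^ 2)) ≤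
        min ((1 + m) * u / 2) (Real.sqrt ((1 + m) / (1 - m)) * Real.tanh (r / 4)) := by
  intro u
  have hm2 : (0:ℝ) < 1 - m ^ 2 := by nlinarith
  have hu : 0 < u := Real.sinh_pos_iff.mpr (by positivity)
  set t := Real.cosh (r / 2) with ht
  have htpos : 0 < t := Real.cosh_pos _
  have ht1 : 1 ≤ t := Real.one_le_cosh _
  have htsq : t ^ 2 = 1 + u ^ 2 := by
    have := Real.cosh_sq (r / 2)
    simp only [← ht] at this; rw [this]; ring
  have hsqrt_t : Real.sqrt (1 + u ^ 2) = t := by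
    rw [← htsq, Real.sqrt_sq htpos.le]
  set s := Real.sqrt (1 + (1 - m ^ 2) * u ^ 2) with hs
  have hs1 : 1 ≤ s := by
    have h := Real.sq_sqrt (show (0:ℝ) ≤ 1 + (1 - m ^ 2) * u ^ 2 by positivity)
    have h2 := Real.sqrt_nonneg (1 + (1 - m ^ 2) * u ^ 2)
    rw [hs]; nlinarith
  have hst : s ≤ t := by
    rw [hs, ← hsqrt_t]
    exact Real.sqrt_le_sqrt (by nlinarith)
  -- tanh identity
  have hcosh4 : Real.cosh (r / 4) ≠ 0 := (Real.cosh_pos _).ne'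
  have hsinh2 : u = 2 * Real.sinh (r / 4) * Real.cosh (r / 4) := by
    have := Real.sinh_two_mul (r / 4)
    rw [show 2 * (r / 4) = r / 2 by ring] at this
    exact this
  have hcosh2 : t = 2 * Real.cosh (r / 4) ^ 2 - 1 := by
    have := Real.cosh_two_mul (r / 4)
    rw [show 2 * (r / 4) = r / 2 by ring] at this
    have h4 := Real.cosh_sq (r / 4)
    rw [ht, this]; linarith
  have htanh : Real.tanh (r / 4) = u / (1 + t) := by
    rw [Real.tanh_eq_sinh_div_cosh, hsinh2, hcosh2]
    field_simp
    ring
  have h1t : (0:ℝ) < 1 + t := by linarith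
  have h1s : (0:ℝ) < 1 + s := by linarith
  have hm1' : (0:ℝ) < 1 + m := by linarith
  refine ⟨?_, le_min ?_ ?_⟩
  · rw [htanh, ← mul_div_assoc]
    exact div_le_div_of_nonneg_left (mul_nonneg hm1'.le hu.le) h1s (by linarith)
  · exact div_le_div_of_nonneg_left (mul_nonneg hm1'.le hu.le) (by norm_num : (0:ℝ) < 2) (by linarith : (2:ℝ) ≤ 1 + s)
  · rw [htanh]
    set c := Real.sqrt ((1 + m) / (1 - m)) with hc
    have hcpos : 0 < c := Real.sqrt_pos.mpr (div_pos hm1' (by linarith))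
    set a := Real.sqrt (1 - m ^ 2) with ha
    have hapos : 0 < a := Real.sqrt_pos.mpr hm2
    have hca : c * a = 1 + m := by
      rw [hc, ha, ← Real.sqrt_mul (div_pos hm1' (by linarith : (0:ℝ) < 1 - m)).le]
      rw [show (1 + m) / (1 - m) * (1 - m ^ 2) = (1 + m) ^ 2 by
        have h1m : (1 - m) ≠ 0 := by linarith
        field_simp; ring]
      exact Real.sqrt_sq hm1'.le
    have ha1 : a ≤ 1 := by
      have h := Real.sq_sqrt hm2.le
      have h2 := Real.sqrt_nonneg (1 - m ^ 2)
      rw [ha]; nlinarith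
    have hat : a * t ≤ s := by
      rw [ha, ← hsqrt_t, ← Real.sqrt_mul hm2.le, hs]
      exact Real.sqrt_le_sqrt (by nlinarith)
    rw [show c * (u / (1 + t)) = c * u / (1 + t) from (mul_div_assoc _ _ _).symm,
      div_le_div_iff₀ h1s h1t]
    have key : (1 + m) * (1 + t) ≤ c * (1 + s) := by
      calc (1 + m) * (1 + t) = c * (a * (1 + t)) := by rw [← hca]; ring
        _ ≤ c * (1 + s) := by
            apply mul_le_mul_of_nonneg_left _ hcpos.le
            nlinarith
    nlinarith
end

section
/- Let a, b be points of the open unit disk lying on a common diameter through 0 (i.e., 0, a, b collinear), a ≠ b. Then the visual angle v(a,b) := sup over z on the unit circle of the angle ∠(a,z,b) satisfies tan v(a,b) = sinh(ρ(a,b)/2), where ρ is the hyperbolic metric of the unit disk defined by sinh(ρ(a,b)/2) = |a−b|/√((1−|a|²)(1−|b|²)). -/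
/-!
Both sides are invariant under rotations about `0`, so we may assume that `a = α` and `b = β`
are real. For `z = x + iy` on the unit circle, `w = (α - z) * conj (β - z)` has real part
`1 + αβ - (α + β) x > 0` and imaginary part `(α - β) y`, so
`∠ α z β = arctan (|α - β| |y| / Re w)`. With `q = √((1 - α²)(1 - β²))` we have
`(α + β)² + q² = (1 + αβ)²`, so Cauchy–Schwarz gives `(α + β) x + q |y| ≤ 1 + αβ`, that is
`tan ∠ α z β ≤ |α - β| / q`, with equality at `z = ((α + β) + q i) / (1 + αβ)`.
-/

open Complex EuclideanGeometry

/-- The visual angle metric of the unit disk. -/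
noncomputable def vam (a b : ℂ) : ℝ :=
  sSup {θ : ℝ | ∃ z : ℂ, ‖z‖ = 1 ∧ θ = EuclideanGeometry.angle a z b}

open scoped Real ComplexConjugate

theorem Complex.norm_eq_one_iff_sq_add_sq {z : ℂ} : ‖z‖ = 1 ↔ z.re ^ 2 + z.im ^ 2 = 1 := by
  rw [norm_eq_sqrt_sq_add_sq, Real.sqrt_eq_one]

theorem Complex.tan_abs_arg (z : ℂ) : Real.tan |z.arg| = |z.im| / z.re := by
  rcases le_or_gt 0 z.arg with h | h
  · rw [abs_of_nonneg h, abs_of_nonneg (arg_nonneg_iff.1 h), tan_arg]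
  · rw [abs_of_neg h, abs_of_neg (arg_neg_iff.1 h), Real.tan_neg, tan_arg, neg_div]

theorem Complex.angle_eq_arctan_of_re_pos {x y : ℂ} (h : 0 < (x * conj y).re) :
    InnerProductGeometry.angle x y = Real.arctan (|(x * conj y).im| / (x * conj y).re) := by
  set w := x * conj y
  have hw : w ≠ 0 := by rintro hw; simp [hw] at h
  have hy : y ≠ 0 := by rintro rfl; simp [w] at hw
  have hangle : InnerProductGeometry.angle x y = |w.arg| := by
    rw [← angle_mul_right ((map_ne_zero (starRingEnd ℂ)).2 hy), mul_conj,
      angle_eq_abs_arg hw (ofReal_ne_zero.2 (normSq_pos.2 hy).ne'), div_eq_mul_inv, ← ofReal_inv,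
      arg_mul_real (inv_pos.2 (normSq_pos.2 hy))]
  have hlt : |w.arg| < π / 2 := abs_arg_lt_pi_div_two_iff.2 (Or.inl h)
  rw [hangle, ← tan_abs_arg, Real.arctan_tan (by linarith [abs_nonneg w.arg, Real.pi_pos]) hlt]

theorem EuclideanGeometry.angle_complex_mul_left {u : ℂ} (hu : u ≠ 0) (a z b : ℂ) :
    ∠ (u * a) (u * z) (u * b) = ∠ a z b := by
  simp only [EuclideanGeometry.angle, vsub_eq_sub, ← mul_sub, angle_mul_left hu]

theorem vam_mul_left {u : ℂ} (hu : ‖u‖ = 1) (a b : ℂ) : vam (u * a) (u * b) = vam a b := by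
  have hu0 : u ≠ 0 := norm_ne_zero_iff.1 (by rw [hu]; exact one_ne_zero)
  unfold vam
  congr 1
  ext θ
  constructor
  · rintro ⟨z, hz, rfl⟩
    refine ⟨z / u, by rw [norm_div, hz, hu, div_one], ?_⟩
    rw [← angle_complex_mul_left hu0 a, mul_div_cancel₀ z hu0]
  · rintro ⟨z, hz, rfl⟩
    exact ⟨u * z, by rw [norm_mul, hu, hz, one_mul], (angle_complex_mul_left hu0 a z b).symm⟩

theorem exists_eq_mul_ofReal_of_collinear {a b : ℂ} (h : Collinear ℝ ({0, a, b} : Set ℂ)) :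
    ∃ u : ℂ, ‖u‖ = 1 ∧ ∃ α β : ℝ, a = u * α ∧ b = u * β := by
  obtain ⟨v, hv⟩ := (collinear_iff_of_mem (by simp : (0 : ℂ) ∈ _)).1 h
  obtain ⟨r, hr⟩ := hv a (by simp)
  obtain ⟨s, hs⟩ := hv b (by simp)
  refine ⟨exp (v.arg * I), norm_exp_ofReal_mul_I _, r * ‖v‖, s * ‖v‖, ?_, ?_⟩
  · rw [hr, vadd_eq_add, add_zero, real_smul]
    nth_rw 1 [← norm_mul_exp_arg_mul_I v]; push_cast; ring
  · rw [hs, vadd_eq_add, add_zero, real_smul]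
    nth_rw 1 [← norm_mul_exp_arg_mul_I v]; push_cast; ring

theorem one_add_mul_sub_add_mul_pos {α β x : ℝ} (hα : |α| < 1) (hβ : |β| < 1) (hx : |x| ≤ 1) :
    0 < 1 + α * β - (α + β) * x := by
  rw [abs_lt] at hα hβ
  rw [abs_le] at hx
  -- `1 + αβ - (α + β) x` is affine in `x` and positive at `x = ±1`.
  have h₁ : 0 < (1 - α) * (1 - β) := mul_pos (by linarith) (by linarith)
  have h₂ : 0 < (1 + α) * (1 + β) := mul_pos (by linarith) (by linarith)
  nlinarith [mul_nonneg (by linarith : 0 ≤ 1 + x) h₁.le,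
    mul_nonneg (by linarith : 0 ≤ 1 - x) h₂.le]

theorem mul_add_mul_le_of_sq_add_sq_eq {p q r x y : ℝ} (hr : 0 ≤ r) (hpq : p ^ 2 + q ^ 2 = r ^ 2)
    (hxy : x ^ 2 + y ^ 2 = 1) : p * x + q * y ≤ r := by
  nlinarith [sq_nonneg (p * y - q * x), sq_nonneg (p * x + q * y - r)]

theorem angle_ofReal_ofReal_eq_arctan {α β : ℝ} {z : ℂ} (hα : |α| < 1) (hβ : |β| < 1)
    (hz : ‖z‖ = 1) :
    ∠ (α : ℂ) z β = Real.arctan (|α - β| * |z.im| / (1 + α * β - (α + β) * z.re)) := by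
  have hre : (((α : ℂ) - z) * conj ((β : ℂ) - z)).re = 1 + α * β - (α + β) * z.re := by
    simp only [map_sub, conj_ofReal, mul_re, sub_re, sub_im, ofReal_re, ofReal_im, conj_re,
      conj_im]
    linear_combination norm_eq_one_iff_sq_add_sq.1 hz
  have him : (((α : ℂ) - z) * conj ((β : ℂ) - z)).im = (α - β) * z.im := by
    simp only [map_sub, conj_ofReal, mul_im, sub_re, sub_im, ofReal_re, ofReal_im, conj_re,
      conj_im]
    ring
  have hpos := one_add_mul_sub_add_mul_pos hα hβ (hz ▸ abs_re_le_norm z)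
  rw [EuclideanGeometry.angle, vsub_eq_sub, vsub_eq_sub,
    angle_eq_arctan_of_re_pos (hre ▸ hpos), hre, him, abs_mul]

theorem vam_ofReal_ofReal {α β : ℝ} (hα : |α| < 1) (hβ : |β| < 1) :
    vam α β = Real.arctan (|α - β| / √((1 - α ^ 2) * (1 - β ^ 2))) := by
  have hα2 : α ^ 2 < 1 := by rwa [← sq_abs, sq_lt_one_iff_abs_lt_one, abs_abs]
  have hβ2 : β ^ 2 < 1 := by rwa [← sq_abs, sq_lt_one_iff_abs_lt_one, abs_abs]
  have hp : 0 < 1 + α * β := by nlinarith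
  set q := √((1 - α ^ 2) * (1 - β ^ 2))
  have hq : 0 < q := Real.sqrt_pos.2 (by nlinarith)
  have hpq : (α + β) ^ 2 + q ^ 2 = (1 + α * β) ^ 2 := by
    rw [Real.sq_sqrt (by nlinarith)]; ring
  clear_value q
  refine IsGreatest.csSup_eq ⟨?_, ?_⟩
  · set z₀ : ℂ := ⟨(α + β) / (1 + α * β), q / (1 + α * β)⟩
    have hz₀ : ‖z₀‖ = 1 := by
      rw [norm_eq_one_iff_sq_add_sq, div_pow, div_pow, ← add_div, hpq,
        div_self (by positivity)]
    refine ⟨z₀, hz₀, ?_⟩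
    rw [angle_ofReal_ofReal_eq_arctan hα hβ hz₀]
    congr 1
    simp only [z₀, abs_of_pos (div_pos hq hp)]
    field_simp
    rw [← hpq, add_sub_cancel_left, mul_div_cancel_right₀ _ (pow_ne_zero 2 hq.ne')]
  · rintro θ ⟨z, hz, rfl⟩
    rw [angle_ofReal_ofReal_eq_arctan hα hβ hz]
    refine Real.arctan_strictMono.monotone ?_
    have hden := one_add_mul_sub_add_mul_pos hα hβ (hz ▸ abs_re_le_norm z)
    have hCS : (α + β) * z.re + q * |z.im| ≤ 1 + α * β :=
      mul_add_mul_le_of_sq_add_sq_eq hp.le hpq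
        (by rw [sq_abs]; exact norm_eq_one_iff_sq_add_sq.1 hz)
    rw [div_le_div_iff₀ hden hq, mul_assoc]
    exact mul_le_mul_of_nonneg_left (by linarith) (abs_nonneg _)

theorem vam_radial_general (a b : ℂ) (ha : ‖a‖ < 1) (hb : ‖b‖ < 1)
    (hcol : Collinear ℝ ({0, a, b} : Set ℂ)) :
    Real.tan (vam a b) =
      ‖a - b‖ / Real.sqrt ((1 - ‖a‖ ^ 2) * (1 - ‖b‖ ^ 2)) := by
  obtain ⟨u, hu, α, β, rfl, rfl⟩ := exists_eq_mul_ofReal_of_collinear hcol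
  have hnorm (γ : ℝ) : ‖u * γ‖ = |γ| := by rw [norm_mul, hu, one_mul, norm_real, Real.norm_eq_abs]
  rw [hnorm] at ha hb
  rw [vam_mul_left hu, vam_ofReal_ofReal ha hb, Real.tan_arctan, ← mul_sub, ← ofReal_sub,
    hnorm, hnorm, hnorm, sq_abs, sq_abs]

theorem vam_radial (a b : ℂ) (ha : ‖a‖ < 1) (hb : ‖b‖ < 1)
    (hab : a ≠ b) (hcol : Collinear ℝ ({0, a, b} : Set ℂ)) :
    Real.tan (vam a b) =
      ‖a - b‖ / Real.sqrt ((1 - ‖a‖ ^ 2) * (1 - ‖b‖ ^ 2)) :=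
  vam_radial_general a b ha hb hcol
end

section
/- Let a, b be distinct points of the open unit disk, not both on a line through 0, with |a| = |b|, and let m = (a+b)/2, s = |m|, t = |a−b|/2. Then with u = sinh(ρ(a,b)/2) = 2t/(1−s²−t²) (the hyperbolic metric), the quantity tan(v/2) where v = 2·arctan(t/(1−s)) satisfies tan(v/2) = (1+s)u/(1 + √(1 + (1−s²)u²)). -/
/-!
By the parallelogram law `s² + t² = (|a|² + |b|²)/2 < 1`, so with `D = 1 - s² - t² > 0` one has
`1 + (1 - s²) u² = ((1 - s² + t²)/D)²`. The right-hand side therefore simplifies to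
`(1 + s) · 2t / (2(1 - s²)) = t/(1 - s)`, which is `tan (arctan (t/(1 - s)))`.
-/

open Complex

section HalfAngle

variable {s t : ℝ}

theorem sqrt_one_add_mul_sq_eq (h : s ^ 2 + t ^ 2 < 1) :
    √(1 + (1 - s ^ 2) * (2 * t / (1 - s ^ 2 - t ^ 2)) ^ 2) =
      (1 - s ^ 2 + t ^ 2) / (1 - s ^ 2 - t ^ 2) := by
  have hD : 0 < 1 - s ^ 2 - t ^ 2 := by linarith
  have hsq : 1 + (1 - s ^ 2) * (2 * t / (1 - s ^ 2 - t ^ 2)) ^ 2 =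
      ((1 - s ^ 2 + t ^ 2) / (1 - s ^ 2 - t ^ 2)) ^ 2 := by
    field_simp
    ring
  rw [hsq, Real.sqrt_sq (div_nonneg (by nlinarith) hD.le)]

theorem div_one_sub_eq_of_sq_add_sq_lt_one (h : s ^ 2 + t ^ 2 < 1) :
    t / (1 - s) = (1 + s) * (2 * t / (1 - s ^ 2 - t ^ 2)) /
      (1 + √(1 + (1 - s ^ 2) * (2 * t / (1 - s ^ 2 - t ^ 2)) ^ 2)) := by
  have hD : 0 < 1 - s ^ 2 - t ^ 2 := by linarith
  have hs : 0 < 1 - s ^ 2 := by nlinarith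
  have h1s : 1 - s ≠ 0 := by nlinarith
  have hden : 1 + (1 - s ^ 2 + t ^ 2) / (1 - s ^ 2 - t ^ 2) =
      2 * (1 - s ^ 2) / (1 - s ^ 2 - t ^ 2) := by
    field_simp
    ring
  rw [sqrt_one_add_mul_sq_eq h, hden]
  field_simp
  ring

end HalfAngle

theorem tan_half_vam_equal_moduli_general (a b : ℂ)
    (ha : ‖a‖ < 1) (hb : ‖b‖ < 1) :
    let m := (a + b) / 2
    let s := ‖m‖
    let t := ‖a - b‖ / 2
    let u := 2 * t / (1 - s ^ 2 - t ^ 2)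
    let v := 2 * Real.arctan (t / (1 - s))
    Real.tan (v / 2) = (1 + s) * u / (1 + Real.sqrt (1 + (1 - s ^ 2) * u ^ 2)) := by
  intro m s t u v
  have hst : s ^ 2 + t ^ 2 < 1 := by
    have hs : s = ‖a + b‖ / 2 := by simp only [s, m, norm_div, Complex.norm_two]
    have hpar := parallelogram_law_with_norm ℝ a b
    rw [hs, show t = ‖a - b‖ / 2 from rfl]
    nlinarith [norm_nonneg a, norm_nonneg b]
  rw [show v / 2 = Real.arctan (t / (1 - s)) by ring, Real.tan_arctan]
  exact div_one_sub_eq_of_sq_add_sq_lt_one hst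

theorem tan_half_vam_equal_moduli (a b : ℂ)
    (ha : ‖a‖ < 1) (hb : ‖b‖ < 1) (hab : a ≠ b)
    (heq : ‖a‖ = ‖b‖)
    (hnc : ¬ Collinear ℝ ({0, a, b} : Set ℂ)) :
    let m := (a + b) / 2
    let s := ‖m‖
    let t := ‖a - b‖ / 2
    let u := 2 * t / (1 - s ^ 2 - t ^ 2)
    let v := 2 * Real.arctan (t / (1 - s))
    Real.tan (v / 2) = (1 + s) * u / (1 + Real.sqrt (1 + (1 - s ^ 2) * u ^ 2)) :=
  tan_half_vam_equal_moduli_general a b ha hb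
end

section
/- For real numbers m ∈ [0,1) and ρ ≥ 0, the quantity τ = (1+m)·sinh(ρ/2)/(1 + √(1 + (1−m²)·sinh²(ρ/2))) satisfies (1+m)·tanh(ρ/4) ≤ τ ≤ min{ ((1+m)/2)·sinh(ρ/2), √((1+m)/(1−m))·tanh(ρ/4) }. -/
theorem tan_half_vam_bounds (m ρ : ℝ) (hm0 : 0 ≤ m) (hm1 : m < 1) (hρ : 0 ≤ ρ) :
    let τ := (1 + m) * Real.sinh (ρ / 2) /
      (1 + Real.sqrt (1 + (1 - m ^ 2) * Real.sinh (ρ / 2) ^ 2))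
    (1 + m) * Real.tanh (ρ / 4) ≤ τ ∧
      τ ≤ min ((1 + m) / 2 * Real.sinh (ρ / 2))
        (Real.sqrt ((1 + m) / (1 - m)) * Real.tanh (ρ / 4)) := by
  intro τ
  set s := Real.sinh (ρ / 2) with hs_def
  have hs : 0 ≤ s := Real.sinh_nonneg_iff.2 (by linarith)
  have hc2 : Real.cosh (ρ / 2) = Real.sqrt (1 + s ^ 2) := by
    rw [show (1 : ℝ) + s ^ 2 = Real.cosh (ρ / 2) ^ 2 by rw [Real.cosh_sq]; ring]
    exact (Real.sqrt_sq (Real.cosh_pos _).le).symm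
  have hT : Real.tanh (ρ / 4) = s / (1 + Real.sqrt (1 + s ^ 2)) := by
    rw [← hc2, hs_def, show ρ / 2 = 2 * (ρ / 4) by ring, Real.sinh_two_mul,
      Real.cosh_two_mul, Real.tanh_eq_sinh_div_cosh]
    have hc : Real.cosh (ρ / 4) ≠ 0 := (Real.cosh_pos _).ne'
    have hc' : Real.cosh (ρ / 4) > 0 := Real.cosh_pos _
    field_simp
    linear_combination (-Real.sinh (ρ / 4)) * Real.cosh_sq (ρ / 4)
  set A := Real.sqrt (1 + (1 - m ^ 2) * s ^ 2) with hA_def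
  set B := Real.sqrt (1 + s ^ 2) with hB_def
  have hm2 : 0 < 1 - m ^ 2 := by nlinarith
  have hA1 : 1 ≤ A :=
    calc (1 : ℝ) = Real.sqrt 1 := Real.sqrt_one.symm
      _ ≤ A := Real.sqrt_le_sqrt (by nlinarith)
  have hB1 : 1 ≤ B :=
    calc (1 : ℝ) = Real.sqrt 1 := Real.sqrt_one.symm
      _ ≤ B := Real.sqrt_le_sqrt (by nlinarith)
  have hAB : A ≤ B := Real.sqrt_le_sqrt (by nlinarith)
  have hApos : 0 < 1 + A := by linarith
  have hBpos : 0 < 1 + B := by linarith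
  have hnum : 0 ≤ (1 + m) * s := by positivity
  refine ⟨?_, le_min ?_ ?_⟩
  · rw [hT]
    show (1 + m) * (s / (1 + B)) ≤ (1 + m) * s / (1 + A)
    rw [mul_div_assoc]
    exact mul_le_mul_of_nonneg_left
      (div_le_div_of_nonneg_left hs hApos (by linarith)) (by linarith)
  · show (1 + m) * s / (1 + A) ≤ (1 + m) / 2 * s
    calc (1 + m) * s / (1 + A) ≤ (1 + m) * s / 2 :=
            div_le_div_of_nonneg_left hnum (by norm_num) (by linarith)
      _ = (1 + m) / 2 * s := by ring
  · rw [hT]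
    have hk : Real.sqrt ((1 + m) / (1 - m)) * Real.sqrt (1 - m ^ 2) = 1 + m := by
      have h1m : (1 : ℝ) - m ≠ 0 := by linarith
      rw [← Real.sqrt_mul (div_nonneg (by linarith) (by linarith))]
      rw [show (1 + m) / (1 - m) * (1 - m ^ 2) = (1 + m) ^ 2 by
        field_simp; ring]
      exact Real.sqrt_sq (by linarith)
    have hkey : Real.sqrt (1 - m ^ 2) * (1 + B) ≤ 1 + A := by
      have h1 : Real.sqrt (1 - m ^ 2) ≤ 1 :=
        calc Real.sqrt (1 - m ^ 2) ≤ Real.sqrt 1 := Real.sqrt_le_sqrt (by nlinarith)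
          _ = 1 := Real.sqrt_one
      have h2 : Real.sqrt (1 - m ^ 2) * B ≤ A := by
        rw [hA_def, hB_def, ← Real.sqrt_mul hm2.le]
        exact Real.sqrt_le_sqrt (by nlinarith)
      nlinarith
    have hknn : 0 ≤ Real.sqrt ((1 + m) / (1 - m)) := Real.sqrt_nonneg _
    show (1 + m) * s / (1 + A) ≤ Real.sqrt ((1 + m) / (1 - m)) * (s / (1 + B))
    rw [← mul_div_assoc, div_le_div_iff₀ hApos hBpos]
    have : (1 + m) * (1 + B) ≤ Real.sqrt ((1 + m) / (1 - m)) * (1 + A) := by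
      calc (1 + m) * (1 + B)
          = Real.sqrt ((1 + m) / (1 - m)) * (Real.sqrt (1 - m ^ 2) * (1 + B)) := by
            rw [← mul_assoc, hk]
        _ ≤ Real.sqrt ((1 + m) / (1 - m)) * (1 + A) := by
            exact mul_le_mul_of_nonneg_left hkey hknn
    nlinarith
end
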